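/- arXiv:1411.5768 — 8 statements merged into one kernel-verified Lean document; each statement's English description precedes it below -/
import Mathlib

section
/- Let W > 0 and Q ∈ (0, W). Set R* = W·(2 - Q/W)². Then the function f(w) = w - R*/(2 - w/W) on [0, W) satisfies: f(w) ≥ f(Q) if and only if w = Q. -/
theorem stmt_1 (W Q Rs : ℝ) (hW : 0 < W) (hQ0 : 0 < Q) (hQW : Q < W)
    (hRs : Rs = W * (2 - Q / W) ^ 2) :
    ∀ w : ℝ, 0 ≤ w → w < W →
      (w - Rs / (2 - w / W) ≥ Q - Rs / (2 - Q / W) ↔ w = Q) := by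
  intro w hw0 hwW
  have hW' : (W : ℝ) ≠ 0 := ne_of_gt hW
  have ha : 0 < 2 - w / W := by
    have : w / W < 1 := (div_lt_one hW).mpr hwW
    linarith
  have hb : 0 < 2 - Q / W := by
    have : Q / W < 1 := (div_lt_one hW).mpr hQW
    linarith
  have key : w - Rs / (2 - w / W) - (Q - Rs / (2 - Q / W))
      = -((w - Q) ^ 2) / ((2 - w / W) * W) := by
    have ha' : (2 - w / W) ≠ 0 := ne_of_gt ha
    have hb' : (2 - Q / W) ≠ 0 := ne_of_gt hb
    have hc' : (2 * W - w) ≠ 0 := by nlinarith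
    have hd' : (2 * W - Q) ≠ 0 := by nlinarith
    have e1 : Rs / (2 - Q / W) = W * (2 - Q / W) := by
      rw [hRs]; field_simp
    rw [e1, eq_div_iff (by positivity : (2 - w / W) * W ≠ 0), hRs]
    have hc2 : W * 2 - w ≠ 0 := by rwa [mul_comm]
    field_simp
    ring
  constructor
  · intro h
    have hle : 0 ≤ -((w - Q) ^ 2) / ((2 - w / W) * W) := by
      rw [← key]; linarith
    have hpos : 0 < (2 - w / W) * W := mul_pos ha hW
    have h2 : 0 ≤ -((w - Q) ^ 2) := by
      by_contra hneg
      push_neg at hneg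
      nlinarith [div_neg_of_neg_of_pos hneg hpos]
    have : (w - Q) ^ 2 = 0 := by nlinarith [sq_nonneg (w - Q)]
    have := pow_eq_zero_iff (n := 2) (by norm_num) |>.mp this
    linarith
  · intro h; subst h; simp
end

section
/- Let O ↦ t(O) be the total travel cost function t(O) = Σ_{i=1}^n d_i / (v_max - ν·Σ_{j ≤ i} w(O_j)), where O_j is the set of items of O located at city j. For any item e located at some city, and any sets A ⊆ B of items not containing e (with all loads feasible, i.e., total weights plus w(e) at most W), one has t(A ∪ {e}) - t(A) ≤ t(B ∪ {e}) - t(B). -/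
/-- Total travel cost along the route when the items of `S` are selected:
the vehicle traverses edge `i` (from city `i` to city `i+1`) carrying all
selected items located at cities `≤ i`. -/
noncomputable def travelCost {n : ℕ} {ι : Type*} [Fintype ι] [DecidableEq ι]
    (city : ι → Fin n) (w : ι → ℝ) (d : Fin n → ℝ) (vmax ν : ℝ)
    (S : Finset ι) : ℝ :=
  ∑ i : Fin n, d i / (vmax - ν * ∑ e ∈ S.filter (fun e => city e ≤ i), w e)

/-- Key scalar lemma: the increment of `x ↦ d/(vmax - ν x)` by `c` grows in `x`. -/
lemma incr_mono (vmax ν W c dlen : ℝ) (hν : 0 ≤ ν) (hc : 0 < c) (hd : 0 ≤ dlen)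
    (hvmin : 0 < vmax - ν * W) {a b : ℝ} (ha : 0 ≤ a) (hab : a ≤ b)
    (hb : b + c ≤ W) :
    dlen / (vmax - ν * (a + c)) - dlen / (vmax - ν * a) ≤
      dlen / (vmax - ν * (b + c)) - dlen / (vmax - ν * b) := by
  have key : ∀ x : ℝ, x ≤ W → 0 < vmax - ν * x := by
    intro x hx
    have : ν * x ≤ ν * W := mul_le_mul_of_nonneg_left hx hν
    linarith
  have hXa : 0 < vmax - ν * (a + c) := key _ (by linarith)
  have hYa : 0 < vmax - ν * a := key _ (by linarith)
  have hXb : 0 < vmax - ν * (b + c) := key _ hb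
  have hYb : 0 < vmax - ν * b := key _ (by linarith)
  rw [div_sub_div _ _ (ne_of_gt hXa) (ne_of_gt hYa),
      div_sub_div _ _ (ne_of_gt hXb) (ne_of_gt hYb)]
  have hnum : dlen * (vmax - ν * a) - (vmax - ν * (a + c)) * dlen = dlen * (ν * c) := by ring
  have hnum' : dlen * (vmax - ν * b) - (vmax - ν * (b + c)) * dlen = dlen * (ν * c) := by ring
  rw [hnum, hnum']
  apply div_le_div_of_nonneg_left (by positivity) (by positivity)
  have h1 : vmax - ν * (b + c) ≤ vmax - ν * (a + c) := by nlinarith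
  have h2 : vmax - ν * b ≤ vmax - ν * a := by nlinarith
  calc (vmax - ν * (b + c)) * (vmax - ν * b)
      ≤ (vmax - ν * (a + c)) * (vmax - ν * b) := by nlinarith
    _ ≤ (vmax - ν * (a + c)) * (vmax - ν * a) := by nlinarith

theorem stmt_5 {n : ℕ} {ι : Type*} [Fintype ι] [DecidableEq ι]
    (city : ι → Fin n) (w : ι → ℝ) (d : Fin n → ℝ)
    (vmin vmax W ν : ℝ)
    (hd : ∀ i, 0 < d i) (hw : ∀ e, 0 < w e)
    (hv0 : 0 < vmin) (hvv : vmin < vmax) (hW : 0 < W)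
    (hν : ν = (vmax - vmin) / W)
    (e : ι) (A B : Finset ι) (hAB : A ⊆ B) (heB : e ∉ B)
    (hfeas : (∑ e' ∈ B, w e') + w e ≤ W) :
    travelCost city w d vmax ν (insert e A) - travelCost city w d vmax ν A ≤
      travelCost city w d vmax ν (insert e B) - travelCost city w d vmax ν B := by
  have hν0 : 0 ≤ ν := by
    rw [hν]; apply div_nonneg (by linarith) hW.le
  have hνW : ν * W = vmax - vmin := by
    rw [hν, div_mul_cancel₀]; exact hW.ne'
  have hvminpos : 0 < vmax - ν * W := by rw [hνW]; linarith
  have heA : e ∉ A := fun h => heB (hAB h)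
  unfold travelCost
  rw [← Finset.sum_sub_distrib, ← Finset.sum_sub_distrib]
  apply Finset.sum_le_sum
  intro i _
  set a : ℝ := ∑ e' ∈ A.filter (fun e' => city e' ≤ i), w e' with ha_def
  set b : ℝ := ∑ e' ∈ B.filter (fun e' => city e' ≤ i), w e' with hb_def
  have ha0 : 0 ≤ a := Finset.sum_nonneg fun e' _ => (hw e').le
  have hab : a ≤ b := by
    apply Finset.sum_le_sum_of_subset_of_nonneg
    · exact Finset.filter_subset_filter _ hAB
    · intro e' _ _; exact (hw e').le
  have hbW : b + w e ≤ W := by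
    have : b ≤ ∑ e' ∈ B, w e' :=
      Finset.sum_le_sum_of_subset_of_nonneg (Finset.filter_subset _ _)
        (fun e' _ _ => (hw e').le)
    linarith
  by_cases hc : city e ≤ i
  · have hfA : (insert e A).filter (fun e' => city e' ≤ i)
        = insert e (A.filter (fun e' => city e' ≤ i)) := by
      rw [Finset.filter_insert, if_pos hc]
    have hfB : (insert e B).filter (fun e' => city e' ≤ i)
        = insert e (B.filter (fun e' => city e' ≤ i)) := by
      rw [Finset.filter_insert, if_pos hc]
    rw [hfA, hfB, Finset.sum_insert (by simp [heA]), Finset.sum_insert (by simp [heB])]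
    have := incr_mono vmax ν W (w e) (d i) hν0 (hw e) (hd i).le hvminpos ha0 hab hbW
    calc d i / (vmax - ν * (w e + a)) - d i / (vmax - ν * a)
        = d i / (vmax - ν * (a + w e)) - d i / (vmax - ν * a) := by ring_nf
      _ ≤ d i / (vmax - ν * (b + w e)) - d i / (vmax - ν * b) := this
      _ = d i / (vmax - ν * (w e + b)) - d i / (vmax - ν * b) := by ring_nf
  · have hfA : (insert e A).filter (fun e' => city e' ≤ i)
        = A.filter (fun e' => city e' ≤ i) := by
      rw [Finset.filter_insert, if_neg hc]
    have hfB : (insert e B).filter (fun e' => city e' ≤ i)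
        = B.filter (fun e' => city e' ≤ i) := by
      rw [Finset.filter_insert, if_neg hc]
    rw [hfA, hfB, ← ha_def, ← hb_def]; simp
end

section
/- (Compulsory item) In the unconstrained problem (W ≥ total weight of all items), if an item e with profit p(e) satisfies p(e) > R·(t(M) - t(M \ {e})), where M is the set of all items, then for every subset S ⊆ M \ {e} the objective value of S ∪ {e} is strictly greater than that of S. Hence every optimal solution contains e. -/
lemma helper (D x y c : ℝ) (hD : 0 < D) (hc : 0 ≤ c) (hyc : 0 < y - c) (hxy : y ≤ x) :
    D/(x-c) - D/x ≤ D/(y-c) - D/y := by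
  have hy : 0 < y := by linarith
  have hxc : 0 < x - c := by linarith
  have hx : 0 < x := by linarith
  rw [div_sub_div _ _ (ne_of_gt hxc) (ne_of_gt hx), div_sub_div _ _ (ne_of_gt hyc) (ne_of_gt hy)]
  have h1 : D * x - (x - c) * D = D * c := by ring
  have h2 : D * y - (y - c) * D = D * c := by ring
  rw [h1, h2]
  gcongr

/-- Objective value: total profit of the selected items minus the rent rate times
the total travel cost. -/
noncomputable def objective {n : ℕ} {ι : Type*} [Fintype ι] [DecidableEq ι]
    (city : ι → Fin n) (w p : ι → ℝ) (d : Fin n → ℝ) (vmax ν R : ℝ)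
    (S : Finset ι) : ℝ :=
  (∑ e ∈ S, p e) - R * travelCost city w d vmax ν S

theorem stmt_6 {n : ℕ} {ι : Type*} [Fintype ι] [DecidableEq ι]
    (city : ι → Fin n) (w p : ι → ℝ) (d : Fin n → ℝ)
    (vmin vmax W ν R : ℝ)
    (hd : ∀ i, 0 < d i) (hw : ∀ e', 0 < w e')
    (hv0 : 0 < vmin) (hvv : vmin < vmax) (hW : 0 < W)
    (hν : ν = (vmax - vmin) / W) (hR : 0 < R)
    (hunconstr : ∑ e' : ι, w e' ≤ W)
    (e : ι)
    (hcomp : p e > R * (travelCost city w d vmax ν Finset.univ -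
      travelCost city w d vmax ν (Finset.univ.erase e))) :
    (∀ S : Finset ι, e ∉ S →
        objective city w p d vmax ν R S <
          objective city w p d vmax ν R (insert e S)) ∧
    (∀ S : Finset ι,
        (∀ T : Finset ι, objective city w p d vmax ν R T ≤
          objective city w p d vmax ν R S) → e ∈ S) := by
  have hν0 : 0 < ν := by
    rw [hν]; apply div_pos (by linarith) hW
  have hνW : ν * W = vmax - vmin := by
    rw [hν]; field_simp
  -- denominator bound for any subset
  have hden : ∀ T : Finset ι, vmin ≤ vmax - ν * ∑ e' ∈ T, w e' := by
    intro T
    have h1 : ∑ e' ∈ T, w e' ≤ ∑ e' : ι, w e' :=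
      Finset.sum_le_sum_of_subset_of_nonneg (Finset.subset_univ T)
        (fun i _ _ => (hw i).le)
    have h2 : ν * ∑ e' ∈ T, w e' ≤ ν * W := by
      apply mul_le_mul_of_nonneg_left (le_trans h1 hunconstr) hν0.le
    linarith [hνW ▸ h2]
  -- main step inequality
  have key : ∀ S : Finset ι, e ∉ S →
      travelCost city w d vmax ν (insert e S) - travelCost city w d vmax ν S ≤
      travelCost city w d vmax ν Finset.univ -
        travelCost city w d vmax ν (Finset.univ.erase e) := by
    intro S heS
    have hsub : S ⊆ Finset.univ.erase e := fun x hx =>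
      Finset.mem_erase.mpr ⟨fun h => heS (h ▸ hx), Finset.mem_univ x⟩
    have huniv : insert e (Finset.univ.erase e) = (Finset.univ : Finset ι) := by
      rw [Finset.insert_erase (Finset.mem_univ e)]
    unfold travelCost
    rw [← Finset.sum_sub_distrib, ← Finset.sum_sub_distrib]
    apply Finset.sum_le_sum
    intro i _
    set a := ∑ e' ∈ S.filter (fun e' => city e' ≤ i), w e' with ha
    set b := ∑ e' ∈ (Finset.univ.erase e).filter (fun e' => city e' ≤ i), w e' with hb
    have hab : a ≤ b :=
      Finset.sum_le_sum_of_subset_of_nonneg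
        (Finset.filter_subset_filter _ hsub) (fun j _ _ => (hw j).le)
    by_cases hc : city e ≤ i
    · have heS' : e ∉ S.filter (fun e' => city e' ≤ i) := fun h =>
        heS (Finset.mem_of_mem_filter e h)
      have heE' : e ∉ (Finset.univ.erase e).filter (fun e' => city e' ≤ i) := fun h =>
        (Finset.mem_erase.mp (Finset.mem_of_mem_filter e h)).1 rfl
      have hsum1 : ∑ e' ∈ (insert e S).filter (fun e' => city e' ≤ i), w e' = w e + a := by
        rw [Finset.filter_insert, if_pos hc, Finset.sum_insert heS']
      have hsum2 : ∑ e' ∈ (Finset.univ : Finset ι).filter (fun e' => city e' ≤ i), w e'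
          = w e + b := by
        rw [← huniv, Finset.filter_insert, if_pos hc, Finset.sum_insert heE']
      rw [hsum1, hsum2]
      have e1 : vmax - ν * (w e + a) = (vmax - ν * a) - ν * w e := by ring
      have e2 : vmax - ν * (w e + b) = (vmax - ν * b) - ν * w e := by ring
      rw [e1, e2]
      apply helper _ _ _ _ (hd i) (mul_nonneg hν0.le (hw e).le)
      · have := hden ((Finset.univ : Finset ι).filter (fun e' => city e' ≤ i))
        rw [hsum2] at this
        have : vmin ≤ (vmax - ν * b) - ν * w e := by linarith [this]; 
        linarith
      · nlinarith
    · have hsum1 : ∑ e' ∈ (insert e S).filter (fun e' => city e' ≤ i), w e' = a := by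
        rw [Finset.filter_insert, if_neg hc]
      have hsum2 : ∑ e' ∈ (Finset.univ : Finset ι).filter (fun e' => city e' ≤ i), w e'
          = b := by
        rw [← huniv, Finset.filter_insert, if_neg hc]
      rw [hsum1, hsum2]
      simp
  have part1 : ∀ S : Finset ι, e ∉ S →
      objective city w p d vmax ν R S < objective city w p d vmax ν R (insert e S) := by
    intro S heS
    have hk := key S heS
    have hRk : R * (travelCost city w d vmax ν (insert e S) - travelCost city w d vmax ν S)
        ≤ R * (travelCost city w d vmax ν Finset.univ -
          travelCost city w d vmax ν (Finset.univ.erase e)) :=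
      mul_le_mul_of_nonneg_left hk hR.le
    have hps : ∑ e' ∈ insert e S, p e' = p e + ∑ e' ∈ S, p e' := Finset.sum_insert heS
    unfold objective
    rw [hps]
    nlinarith [hRk, hcomp]
  refine ⟨part1, fun S hopt => ?_⟩
  by_contra heS
  have h1 := part1 S heS
  have h2 := hopt (insert e S)
  linarith
end

section
/- (Unprofitable item, Case 1) If an item e satisfies p(e) ≤ R·(t({e}) - t(∅)), then for every feasible subset S ⊆ M \ {e} with w(S) + w(e) ≤ W, the objective value of S ∪ {e} is at most the objective value of S. Hence there exists an optimal solution not containing e. -/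
lemma key_frac (vmin vmax ν a b : ℝ) (hv0 : 0 < vmin) (hν : 0 ≤ ν)
    (ha : 0 ≤ a) (hb : 0 ≤ b) (hsum : vmin ≤ vmax - ν * (a + b)) :
    1 / (vmax - ν * b) - 1 / vmax ≤
      1 / (vmax - ν * (a + b)) - 1 / (vmax - ν * a) := by
  have hab : 0 < vmax - ν * (a + b) := lt_of_lt_of_le hv0 hsum
  have hna : 0 ≤ ν * a := mul_nonneg hν ha
  have hnb : 0 ≤ ν * b := mul_nonneg hν hb
  have hAa : 0 < vmax - ν * a := by nlinarith
  have hAb : 0 < vmax - ν * b := by nlinarith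
  have hA : 0 < vmax := by nlinarith
  have e1 : 1 / (vmax - ν * (a + b)) - 1 / (vmax - ν * a) =
      ν * b / ((vmax - ν * (a + b)) * (vmax - ν * a)) := by
    field_simp; ring
  have e2 : 1 / (vmax - ν * b) - 1 / vmax =
      ν * b / ((vmax - ν * b) * vmax) := by
    field_simp; ring
  rw [e1, e2]
  apply div_le_div_of_nonneg_left hnb (by positivity)
  nlinarith

theorem stmt_7 {n : ℕ} {ι : Type*} [Fintype ι] [DecidableEq ι]
    (city : ι → Fin n) (w p : ι → ℝ) (d : Fin n → ℝ)
    (vmin vmax W ν R : ℝ)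
    (hd : ∀ i, 0 < d i) (hw : ∀ e', 0 < w e')
    (hv0 : 0 < vmin) (hvv : vmin < vmax) (hW : 0 < W)
    (hν : ν = (vmax - vmin) / W) (hR : 0 < R)
    (e : ι)
    (hunprof : p e ≤ R * (travelCost city w d vmax ν {e} -
      travelCost city w d vmax ν ∅)) :
    (∀ S : Finset ι, e ∉ S → (∑ e' ∈ S, w e') + w e ≤ W →
        objective city w p d vmax ν R (insert e S) ≤
          objective city w p d vmax ν R S) ∧
    (∃ S : Finset ι, e ∉ S ∧ (∑ e' ∈ S, w e') ≤ W ∧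
        ∀ T : Finset ι, (∑ e' ∈ T, w e') ≤ W →
          objective city w p d vmax ν R T ≤ objective city w p d vmax ν R S) := by
  classical
  have hν0 : 0 ≤ ν := by
    rw [hν]; exact div_nonneg (by linarith) hW.le
  have hνW : ν * W = vmax - vmin := by
    rw [hν]; field_simp
  have main : ∀ S : Finset ι, e ∉ S → (∑ e' ∈ S, w e') + w e ≤ W →
      objective city w p d vmax ν R (insert e S) ≤
        objective city w p d vmax ν R S := by
    intro S heS hwsum
    have hcost : travelCost city w d vmax ν {e} - travelCost city w d vmax ν ∅ ≤
        travelCost city w d vmax ν (insert e S) - travelCost city w d vmax ν S := by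
      unfold travelCost
      rw [← Finset.sum_sub_distrib, ← Finset.sum_sub_distrib]
      apply Finset.sum_le_sum
      intro i _
      set a : ℝ := ∑ e' ∈ S.filter (fun e' => city e' ≤ i), w e' with ha_def
      have ha0 : 0 ≤ a := Finset.sum_nonneg fun x _ => (hw x).le
      have haS : a ≤ ∑ e' ∈ S, w e' :=
        Finset.sum_le_sum_of_subset_of_nonneg (Finset.filter_subset _ _)
          (fun x _ _ => (hw x).le)
      by_cases hci : city e ≤ i
      · have hfe : e ∉ S.filter (fun e' => city e' ≤ i) :=
          fun h => heS (Finset.mem_filter.mp h).1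
        rw [Finset.filter_insert, if_pos hci, Finset.sum_insert hfe,
          Finset.filter_singleton, if_pos hci, Finset.sum_singleton,
          Finset.filter_empty, Finset.sum_empty]
        have hsum' : vmin ≤ vmax - ν * (a + w e) := by
          have h1 : ν * (a + w e) ≤ ν * W :=
            mul_le_mul_of_nonneg_left (by linarith) hν0
          linarith [hνW ▸ h1]
        have hkey := key_frac vmin vmax ν a (w e) hv0 hν0 ha0 (hw e).le hsum'
        calc d i / (vmax - ν * w e) - d i / (vmax - ν * 0)
            = d i * (1 / (vmax - ν * w e) - 1 / vmax) := by
              rw [mul_zero, sub_zero]; ring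
          _ ≤ d i * (1 / (vmax - ν * (a + w e)) - 1 / (vmax - ν * a)) :=
              mul_le_mul_of_nonneg_left hkey (hd i).le
          _ = d i / (vmax - ν * (w e + a)) - d i / (vmax - ν * a) := by
              rw [add_comm (w e) a]; ring
      · rw [Finset.filter_insert, if_neg hci, Finset.filter_singleton,
          if_neg hci, Finset.filter_empty]
        simp [ha_def]
    have hR' : R * (travelCost city w d vmax ν {e} - travelCost city w d vmax ν ∅)
        ≤ R * (travelCost city w d vmax ν (insert e S) - travelCost city w d vmax ν S) :=
      mul_le_mul_of_nonneg_left hcost hR.le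
    unfold objective
    rw [Finset.sum_insert heS]
    linarith
  refine ⟨main, ?_⟩
  obtain ⟨T, hT, hTmax⟩ := Finset.exists_max_image
    ((Finset.univ : Finset ι).powerset.filter fun S => ∑ e' ∈ S, w e' ≤ W)
    (objective city w p d vmax ν R) ⟨∅, by simp [hW.le]⟩
  have hTw : ∑ e' ∈ T, w e' ≤ W := (Finset.mem_filter.mp hT).2
  refine ⟨T.erase e, Finset.notMem_erase e T, ?_, ?_⟩
  · calc ∑ e' ∈ T.erase e, w e' ≤ ∑ e' ∈ T, w e' :=
        Finset.sum_le_sum_of_subset_of_nonneg (Finset.erase_subset _ _)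
          (fun x _ _ => (hw x).le)
      _ ≤ W := hTw
  · intro T' hT'
    have h1 : objective city w p d vmax ν R T' ≤ objective city w p d vmax ν R T :=
      hTmax T' (Finset.mem_filter.mpr ⟨Finset.mem_powerset.mpr (Finset.subset_univ _), hT'⟩)
    have h2 : objective city w p d vmax ν R T ≤
        objective city w p d vmax ν R (T.erase e) := by
      by_cases he : e ∈ T
      · have := main (T.erase e) (Finset.notMem_erase e T)
          (by rw [Finset.sum_erase_add T w he]; exact hTw)
        rwa [Finset.insert_erase he] at this
      · rw [Finset.erase_eq_of_notMem he]
    linarith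
end

section
/- (Unprofitable item, Case 2) In the unconstrained problem, let M^c ⊆ M be a set of items and e ∉ M^c an item with p(e) ≤ R·(t(M^c ∪ {e}) - t(M^c)). Then for every set S with M^c ⊆ S ⊆ M \ {e}, the objective value of S ∪ {e} is at most the objective value of S. -/
lemma aux_div (d c x y : ℝ) (hd : 0 < d) (hc : 0 ≤ c) (hx : 0 < x - c) (hxy : x ≤ y) :
    d / (y - c) - d / y ≤ d / (x - c) - d / x := by
  have hx0 : 0 < x := by linarith
  have hy0 : 0 < y := by linarith
  have hyc : 0 < y - c := by linarith
  rw [div_sub_div _ _ hyc.ne' hy0.ne', div_sub_div _ _ hx.ne' hx0.ne']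
  rw [show d * y - (y - c) * d = d * c by ring, show d * x - (x - c) * d = d * c by ring]
  have h1 : (x - c) * x ≤ (y - c) * y := by nlinarith
  have h2 : 0 ≤ d * c := mul_nonneg hd.le hc
  have h3 : 0 < (x - c) * x := mul_pos hx hx0
  gcongr

theorem stmt_8 {n : ℕ} {ι : Type*} [Fintype ι] [DecidableEq ι]
    (city : ι → Fin n) (w p : ι → ℝ) (d : Fin n → ℝ)
    (vmin vmax W ν R : ℝ)
    (hd : ∀ i, 0 < d i) (hw : ∀ e', 0 < w e')
    (hv0 : 0 < vmin) (hvv : vmin < vmax) (hW : 0 < W)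
    (hν : ν = (vmax - vmin) / W) (hR : 0 < R)
    (hunconstr : ∑ e' : ι, w e' ≤ W)
    (Mc : Finset ι) (e : ι) (heMc : e ∉ Mc)
    (hunprof : p e ≤ R * (travelCost city w d vmax ν (insert e Mc) -
      travelCost city w d vmax ν Mc)) :
    ∀ S : Finset ι, Mc ⊆ S → e ∉ S →
      objective city w p d vmax ν R (insert e S) ≤
        objective city w p d vmax ν R S := by
  intro S hMcS heS
  have hν0 : 0 ≤ ν := by
    rw [hν]; apply div_nonneg <;> linarith
  -- any filtered weight sum leaves remaining speed at least vmin
  have key : ∀ T : Finset ι, vmin ≤ vmax - ν * ∑ x ∈ T, w x := by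
    intro T
    have h1 : ∑ x ∈ T, w x ≤ W :=
      le_trans (Finset.sum_le_sum_of_subset_of_nonneg (Finset.subset_univ T)
        (fun i _ _ => (hw i).le)) hunconstr
    have h2 : ν * ∑ x ∈ T, w x ≤ ν * W := mul_le_mul_of_nonneg_left h1 hν0
    have h3 : ν * W = vmax - vmin := by rw [hν]; field_simp
    linarith
  -- marginal travel cost is monotone in the base set
  have hmarg : travelCost city w d vmax ν (insert e Mc) - travelCost city w d vmax ν Mc ≤
      travelCost city w d vmax ν (insert e S) - travelCost city w d vmax ν S := by
    unfold travelCost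
    rw [← Finset.sum_sub_distrib, ← Finset.sum_sub_distrib]
    apply Finset.sum_le_sum
    intro i _
    set c : ℝ := if city e ≤ i then w e else 0 with hc
    have hc0 : 0 ≤ c := by
      rw [hc]; split <;> [exact (hw e).le; rfl]
    have hins : ∀ (T : Finset ι), e ∉ T →
        ∑ x ∈ (insert e T).filter (fun x => city x ≤ i), w x
          = c + ∑ x ∈ T.filter (fun x => city x ≤ i), w x := by
      intro T heT
      by_cases h : city e ≤ i
      · rw [Finset.filter_insert, if_pos h, Finset.sum_insert (by simp [heT]), hc, if_pos h]
      · rw [Finset.filter_insert, if_neg h, hc, if_neg h, zero_add]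
    rw [hins Mc heMc, hins S heS]
    set sS : ℝ := ∑ x ∈ S.filter (fun x => city x ≤ i), w x
    set sM : ℝ := ∑ x ∈ Mc.filter (fun x => city x ≤ i), w x
    have hsub : sM ≤ sS := by
      apply Finset.sum_le_sum_of_subset_of_nonneg
      · exact Finset.filter_subset_filter _ hMcS
      · exact fun j _ _ => (hw j).le
    have hxy : vmax - ν * sS ≤ vmax - ν * sM := by
      have := mul_le_mul_of_nonneg_left hsub hν0; linarith
    have hx : 0 < (vmax - ν * sS) - ν * c := by
      have := key ((insert e S).filter (fun x => city x ≤ i))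
      rw [hins S heS] at this
      nlinarith
    have h1 : vmax - ν * (c + sM) = (vmax - ν * sM) - ν * c := by ring
    have h2 : vmax - ν * (c + sS) = (vmax - ν * sS) - ν * c := by ring
    rw [h1, h2]
    exact aux_div (d i) (ν * c) _ _ (hd i) (mul_nonneg hν0 hc0) hx hxy
  have hΔ : p e ≤ R * (travelCost city w d vmax ν (insert e S) - travelCost city w d vmax ν S) :=
    le_trans hunprof (mul_le_mul_of_nonneg_left hmarg hR.le)
  unfold objective
  rw [Finset.sum_insert heS]
  nlinarith [hΔ]
end

section
/- (Correctness of the SSP reduction) Let s_1, …, s_q be positive integers, Q a positive integer with Q < W := Σ_k s_k, and set R* = W·(2 − Q/W)². Define g(x) = Σ_k s_k x_k − R*/(2 − (Σ_k s_k x_k)/W) for x ∈ {0,1}^q, and B = Q − R*/(2 − Q/W). Then there exists x ∈ {0,1}^q with g(x) ≥ B if and only if there exists x ∈ {0,1}^q with Σ_k s_k x_k = Q. -/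
lemma key_aux (W u c : ℝ) (hW : 0 < W) (hu : 0 < u) (hc : 0 < c)
    (h : W * (2 - u) - (W * c ^ 2) / u ≥ W * (2 - c) - (W * c ^ 2) / c) :
    u = c := by
  have h1 : (W * c ^ 2) / u * u = W * c ^ 2 := div_mul_cancel₀ _ (ne_of_gt hu)
  have h2 : (W * c ^ 2) / c = W * c := by
    field_simp
  rw [h2] at h
  have h3 := mul_le_mul_of_nonneg_right h (le_of_lt hu)
  -- h3 : (W*(2-c) - W*c) * u ≤ (W*(2-u) - (W*c^2)/u) * u
  have hsq : W * (u - c) ^ 2 ≤ 0 := by nlinarith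
  have : (u - c) ^ 2 ≤ 0 := by nlinarith
  have := le_antisymm this (sq_nonneg _)
  have := pow_eq_zero_iff (n := 2) (by norm_num) |>.mp this
  linarith

theorem stmt_10 (q : ℕ) (s : Fin q → ℕ) (Q : ℕ)
    (hs : ∀ k, 0 < s k) (hQ0 : 0 < Q) (hQW : Q < ∑ k, s k)
    (W Rs B : ℝ) (hW : W = ∑ k, (s k : ℝ))
    (hRs : Rs = W * (2 - (Q : ℝ) / W) ^ 2)
    (hB : B = (Q : ℝ) - Rs / (2 - (Q : ℝ) / W)) :
    (∃ x : Fin q → ℕ, (∀ k, x k ≤ 1) ∧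
        (∑ k, (s k : ℝ) * (x k : ℝ)) -
          Rs / (2 - (∑ k, (s k : ℝ) * (x k : ℝ)) / W) ≥ B) ↔
      (∃ x : Fin q → ℕ, (∀ k, x k ≤ 1) ∧ ∑ k, s k * x k = Q) := by
  have hQW' : (Q : ℝ) < ∑ k, (s k : ℝ) := by exact_mod_cast hQW
  have hW0 : 0 < W := by
    rw [hW]; exact lt_trans (by exact_mod_cast hQ0) hQW'
  have hQltW : (Q : ℝ) < W := by rw [hW]; exact hQW'
  have hc0 : (0 : ℝ) < 2 - (Q : ℝ) / W := by
    have : (Q : ℝ) / W < 1 := (div_lt_one hW0).mpr hQltW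
    linarith
  constructor
  · rintro ⟨x, hx1, hge⟩
    refine ⟨x, hx1, ?_⟩
    set T : ℝ := ∑ k, (s k : ℝ) * (x k : ℝ) with hT
    have hTcast : T = ((∑ k, s k * x k : ℕ) : ℝ) := by
      rw [hT]; push_cast; ring
    have hTW : T ≤ W := by
      rw [hW, hT]
      apply Finset.sum_le_sum
      intro k _
      have : (x k : ℝ) ≤ 1 := by exact_mod_cast hx1 k
      nlinarith [Nat.cast_nonneg (s k) (α := ℝ)]
    have hu0 : (0 : ℝ) < 2 - T / W := by
      have : T / W ≤ 1 := (div_le_one hW0).mpr hTW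
      linarith
    have hTeq : T = W * (2 - (2 - T / W)) := by
      field_simp
      ring
    have hQeq : (Q : ℝ) = W * (2 - (2 - (Q : ℝ) / W)) := by
      field_simp
      ring
    have hge' : W * (2 - (2 - T / W)) - (W * (2 - (Q:ℝ)/W) ^ 2) / (2 - T / W) ≥
        W * (2 - (2 - (Q:ℝ)/W)) - (W * (2 - (Q:ℝ)/W) ^ 2) / (2 - (Q:ℝ)/W) := by
      rw [← hTeq, ← hQeq, ← hRs]
      rw [hB] at hge
      exact hge
    have huc : (2 - T / W) = (2 - (Q:ℝ)/W) := key_aux W _ _ hW0 hu0 hc0 hge'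
    have hTQ : T = (Q : ℝ) := by
      have h1 : T / W = (Q : ℝ) / W := by linarith
      field_simp at h1
      exact h1
    have hfin : ((∑ k, s k * x k : ℕ) : ℝ) = ((Q : ℕ) : ℝ) := by
      rw [← hTcast, hTQ]
    exact_mod_cast hfin
  · rintro ⟨x, hx1, hsum⟩
    refine ⟨x, hx1, ?_⟩
    have hTcast : (∑ k, (s k : ℝ) * (x k : ℝ)) = (Q : ℝ) := by
      push_cast [← hsum]; ring
    rw [hTcast, hB]
end

section
/- (Lower bound on carrying cost between cities) Let j < i and let an item e of weight w be located at city j. Let w_b^c denote the total weight of compulsory items in city b. Then the extra travel cost R·Σ_{a=j}^{i−1} d_a·(1/(v_max − ν·(w + Σ_{b ≤ a} w_b^c)) − 1/(v_max − ν·Σ_{b ≤ a} w_b^c)) is a lower bound on t(S ∪ {e}) − t(S) restricted to edges a = j, …, i−1, for every feasible S ⊇ (compulsory items) with e ∉ S. -/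
lemma stmt16_aux (A B A' B' : ℝ) (hA : 0 < A) (hB : 0 < B)
    (hAA : A ≤ A') (hBB : B ≤ B') (hδ : B - A = B' - A') (hδ0 : 0 ≤ B - A) :
    1 / A' - 1 / B' ≤ 1 / A - 1 / B := by
  have hA' : 0 < A' := hA.trans_le hAA
  have hB' : 0 < B' := hB.trans_le hBB
  have h1 : 1 / A' - 1 / B' = (B' - A') / (A' * B') := by field_simp
  have h2 : 1 / A - 1 / B = (B - A) / (A * B) := by field_simp
  rw [h1, h2, hδ]
  have hpos : 0 < A * B := by positivity
  have hle : A * B ≤ A' * B' := by nlinarith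
  rw [hδ] at hδ0
  exact div_le_div_of_nonneg_left hδ0 hpos hle

theorem stmt_16 {n : ℕ} {ι : Type*} [Fintype ι] [DecidableEq ι]
    (city : ι → Fin n) (w : ι → ℝ) (d : Fin n → ℝ)
    (vmin vmax W ν R : ℝ)
    (hd : ∀ a, 0 < d a) (hw : ∀ e', 0 < w e')
    (hv0 : 0 < vmin) (hvv : vmin < vmax) (hW : 0 < W)
    (hν : ν = (vmax - vmin) / W) (hR : 0 < R)
    (C : Finset ι) (e : ι) (heC : e ∉ C)
    (i : ℕ) (hji : (city e : ℕ) < i) (hin : i ≤ n) :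
    ∀ S : Finset ι, C ⊆ S → e ∉ S → (∑ e' ∈ S, w e') + w e ≤ W →
      R * ∑ a ∈ Finset.univ.filter (fun a : Fin n => city e ≤ a ∧ (a : ℕ) < i),
          d a * (1 / (vmax - ν * (w e + ∑ e' ∈ C.filter (fun e' => city e' ≤ a), w e')) -
                 1 / (vmax - ν * ∑ e' ∈ C.filter (fun e' => city e' ≤ a), w e')) ≤
      R * ∑ a ∈ Finset.univ.filter (fun a : Fin n => city e ≤ a ∧ (a : ℕ) < i),
          (d a / (vmax - ν * ∑ e' ∈ (insert e S).filter (fun e' => city e' ≤ a), w e') -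
           d a / (vmax - ν * ∑ e' ∈ S.filter (fun e' => city e' ≤ a), w e')) := by
  intro S hCS heS hWle
  have hν0 : 0 < ν := by rw [hν]; apply div_pos <;> linarith
  apply mul_le_mul_of_nonneg_left _ hR.le
  apply Finset.sum_le_sum
  intro a ha
  simp only [Finset.mem_filter, Finset.mem_univ, true_and] at ha
  obtain ⟨hja, hia⟩ := ha
  set cC := ∑ e' ∈ C.filter (fun e' => city e' ≤ a), w e' with hcC
  set cS := ∑ e' ∈ S.filter (fun e' => city e' ≤ a), w e' with hcS
  have heSf : e ∉ S.filter (fun e' => city e' ≤ a) := fun h => heS (Finset.mem_of_mem_filter e h)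
  have hsum : ∑ e' ∈ (insert e S).filter (fun e' => city e' ≤ a), w e' = w e + cS := by
    rw [Finset.filter_insert, if_pos hja, Finset.sum_insert heSf]
  rw [hsum]
  have hcCS : cC ≤ cS :=
    Finset.sum_le_sum_of_subset_of_nonneg (Finset.filter_subset_filter _ hCS)
      (fun i _ _ => (hw i).le)
  have hcSS : cS ≤ ∑ e' ∈ S, w e' :=
    Finset.sum_le_sum_of_subset_of_nonneg (Finset.filter_subset _ _)
      (fun i _ _ => (hw i).le)
  have hνW : ν * W = vmax - vmin := by rw [hν]; field_simp
  have hwe : 0 < w e := hw e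
  have hA : 0 < vmax - ν * (w e + cS) := by
    have : ν * (w e + cS) ≤ ν * W := by
      apply mul_le_mul_of_nonneg_left _ hν0.le
      linarith
    linarith [hνW ▸ this]
  have hB : 0 < vmax - ν * cS := by nlinarith
  have key : 1 / (vmax - ν * (w e + cC)) - 1 / (vmax - ν * cC) ≤
      1 / (vmax - ν * (w e + cS)) - 1 / (vmax - ν * cS) := by
    apply stmt16_aux _ _ _ _ hA hB
    · nlinarith
    · nlinarith
    · ring
    · nlinarith
  calc d a * (1 / (vmax - ν * (w e + cC)) - 1 / (vmax - ν * cC))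
      ≤ d a * (1 / (vmax - ν * (w e + cS)) - 1 / (vmax - ν * cS)) :=
        mul_le_mul_of_nonneg_left key (hd a).le
    _ = d a / (vmax - ν * (w e + cS)) - d a / (vmax - ν * cS) := by ring
end

section
/- (Hardness gadget optimality at integer points) Let W > 0 be a positive integer and Q ∈ {1, …, W−1}, R* = W·(2 − Q/W)². Then for all integers w ∈ {0, 1, …, W} with w ≠ Q, one has w − R*/(2 − w/W) < Q − R*/(2 − Q/W), where at w = W the value is interpreted via 2 − W/W = 1 (i.e., v_min = 1 keeps the denominator positive). -/
theorem stmt_18 (W Q : ℕ) (hQ0 : 0 < Q) (hQW : Q < W)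
    (Rs : ℝ) (hRs : Rs = (W : ℝ) * (2 - (Q : ℝ) / W) ^ 2) :
    ∀ w : ℕ, w ≤ W → w ≠ Q →
      (w : ℝ) - Rs / (2 - (w : ℝ) / W) < (Q : ℝ) - Rs / (2 - (Q : ℝ) / W) := by
  intro w hw hne
  have hW0 : (0:ℝ) < W := by exact_mod_cast hQ0.trans hQW
  have hw' : (w:ℝ) ≤ W := by exact_mod_cast hw
  have hQ' : (Q:ℝ) < W := by exact_mod_cast hQW
  have ha : (0:ℝ) < 2 - (w:ℝ)/W := by
    have : (w:ℝ)/W ≤ 1 := by rw [div_le_one hW0]; exact hw'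
    linarith
  have haQ : (0:ℝ) < 2 - (Q:ℝ)/W := by
    have : (Q:ℝ)/W ≤ 1 := by rw [div_le_one hW0]; linarith
    linarith
  have hne' : (w:ℝ) ≠ Q := fun h => hne (Nat.cast_injective h)
  subst hRs
  have e1 : 2 - (w:ℝ)/W = (2*W - w)/W := by field_simp
  have e2 : 2 - (Q:ℝ)/W = (2*W - Q)/W := by field_simp
  have hnz1 : (2*(W:ℝ) - w) ≠ 0 := by linarith
  have hnz2 : (2*(W:ℝ) - Q) ≠ 0 := by linarith
  have key : (w:ℝ) - (W:ℝ)*(2-(Q:ℝ)/W)^2/(2-(w:ℝ)/W) - ((Q:ℝ) - (W:ℝ)*(2-(Q:ℝ)/W)^2/(2-(Q:ℝ)/W))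
      = -((W:ℝ) * ((w:ℝ)/W - (Q:ℝ)/W)^2) / (2-(w:ℝ)/W) := by
    rw [e1, e2]
    have hnz1' : (W:ℝ)*2 - w ≠ 0 := by linarith
    field_simp
    ring
  have hnum : 0 < (W:ℝ) * ((w:ℝ)/W - (Q:ℝ)/W)^2 := by
    have : (w:ℝ)/W - (Q:ℝ)/W ≠ 0 := by
      intro h
      have h2 := sub_eq_zero.mp h
      field_simp at h2
      exact hne (by exact_mod_cast h2)
    positivity
  have h3 : -((W:ℝ) * ((w:ℝ)/W - (Q:ℝ)/W)^2) / (2-(w:ℝ)/W) < 0 :=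
    div_neg_of_neg_of_pos (by linarith) ha
  linarith [key, h3]
end
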